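/- arXiv:2002.03758 — 2 statements merged into one kernel-verified Lean document; each statement's English description precedes it below -/
import Mathlib

section
/- Let H : ℝ^N → ℝ and G : ℝ^N → ℝ be differentiable with H convex and G convex, and suppose H(ρ̃|ρ) ≤ G(ρ̃|ρ) for all ρ, ρ̃ ∈ ℝ^N. Let (ρ_n)_{n≥0} satisfy ∇G(ρ_{n+1}) − ∇G(ρ_n) = −∇H(ρ_n) for all n ≥ 0. Then for every ρ ∈ ℝ^N and every n ≥ 1, the sublinear convergence rate H(ρ_n) ≤ H(ρ) + G(ρ|ρ₀)/n holds. In particular, if ν ∈ ℝ^N is a minimizer of H then H(ρ_n) − H(ν) ≤ G(ν|ρ₀)/n for all n ≥ 1. -/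
/-!
Convexity of `H` and the domination `H(ρ̃|ρ) ≤ G(ρ̃|ρ)` bound `H(ρₙ₊₁)` from above by the
linearisation of `H` at `ρₙ` plus `G(ρₙ₊₁|ρₙ)`; the update rule and the three-point identity of
Bregman divergences turn this into `H(ρₙ₊₁) ≤ H(ρ) + G(ρ|ρₙ) - G(ρ|ρₙ₊₁)`. Taking `ρ = ρₙ` shows
that `H(ρₙ)` decreases, and summing the telescoping bound over the first `n` steps gives the rate.
-/

open RealInnerProductSpace

/-- Bregman divergence of a differentiable function `F : ℝ^N → ℝ`:
`F(φ₂|φ₁) = F(φ₂) − F(φ₁) − ⟨∇F(φ₁), φ₂ − φ₁⟩`. -/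
noncomputable def bregman {N : ℕ} (F : EuclideanSpace ℝ (Fin N) → ℝ)
    (φ₂ φ₁ : EuclideanSpace ℝ (Fin N)) : ℝ :=
  F φ₂ - F φ₁ - ⟪gradient F φ₁, φ₂ - φ₁⟫

theorem ConvexOn.le_sub_of_hasFDerivAt {E : Type*} [NormedAddCommGroup E] [NormedSpace ℝ E]
    {f : E → ℝ} {f' : E →L[ℝ] ℝ} {x : E} (hf : ConvexOn ℝ Set.univ f)
    (hf' : HasFDerivAt f f' x) (y : E) : f' (y - x) ≤ f y - f x := by
  have hline : ConvexOn ℝ Set.univ (f ∘ AffineMap.lineMap (k := ℝ) x y) := by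
    simpa using hf.comp_affineMap (AffineMap.lineMap (k := ℝ) x y)
  have hderiv : HasDerivAt (f ∘ AffineMap.lineMap (k := ℝ) x y) (f' (y - x)) 0 := by
    have hf'' : HasFDerivAt f f' (AffineMap.lineMap (k := ℝ) x y 0) := by simpa using hf'
    exact hf''.comp_hasDerivAt 0 AffineMap.hasDerivAt_lineMap
  simpa [slope_def_field] using
    hline.le_slope_of_hasDerivAt (Set.mem_univ 0) (Set.mem_univ 1) one_pos hderiv

section Bregman

variable {N : ℕ} {F : EuclideanSpace ℝ (Fin N) → ℝ}

theorem bregman_nonneg {x : EuclideanSpace ℝ (Fin N)} (hd : DifferentiableAt ℝ F x)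
    (hc : ConvexOn ℝ Set.univ F) (y : EuclideanSpace ℝ (Fin N)) : 0 ≤ bregman F y x := by
  have h := hc.le_sub_of_hasFDerivAt hd.hasGradientAt.hasFDerivAt y
  rw [InnerProductSpace.toDual_apply_apply] at h
  unfold bregman
  linarith

theorem bregman_self (x : EuclideanSpace ℝ (Fin N)) : bregman F x x = 0 := by
  simp [bregman]

theorem bregman_three_point (ρ y x : EuclideanSpace ℝ (Fin N)) :
    bregman F ρ x = bregman F ρ y + bregman F y x + ⟪gradient F y - gradient F x, ρ - y⟫ := by
  simp only [bregman, inner_sub_left, inner_sub_right]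
  ring

end Bregman

theorem le_add_div_of_antitone_of_le_add_sub {a d : ℕ → ℝ} {c : ℝ} (ha : Antitone a)
    (hd : ∀ n, 0 ≤ d n) (hstep : ∀ n, a (n + 1) ≤ c + d n - d (n + 1)) {n : ℕ} (hn : 1 ≤ n) :
    a n ≤ c + d 0 / n := by
  have hsum : ∀ m : ℕ, m * a m ≤ m * c + d 0 - d m := by
    intro m
    induction m with
    | zero => simp
    | succ m ih =>
      have hmono : (m : ℝ) * a (m + 1) ≤ m * a m :=
        mul_le_mul_of_nonneg_left (ha m.le_succ) m.cast_nonneg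
      push_cast
      linarith [hstep m]
  have hpos : (0 : ℝ) < n := by exact_mod_cast hn
  have : a n - c ≤ d 0 / n := by
    rw [le_div_iff₀ hpos]
    linarith [hsum n, hd n]
  linarith

section MirrorDescent

variable {N : ℕ} {H G : EuclideanSpace ℝ (Fin N) → ℝ} {ρseq : ℕ → EuclideanSpace ℝ (Fin N)}

theorem mirrorDescent_step_le (hHdiff : Differentiable ℝ H) (hHconv : ConvexOn ℝ Set.univ H)
    (hdom : ∀ ρ ρ' : EuclideanSpace ℝ (Fin N), bregman H ρ' ρ ≤ bregman G ρ' ρ)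
    (hiter : ∀ n : ℕ,
      gradient G (ρseq (n + 1)) - gradient G (ρseq n) = -gradient H (ρseq n))
    (ρ : EuclideanSpace ℝ (Fin N)) (n : ℕ) :
    H (ρseq (n + 1)) ≤ H ρ + bregman G ρ (ρseq n) - bregman G ρ (ρseq (n + 1)) := by
  have hlin := bregman_nonneg (hHdiff (ρseq n)) hHconv ρ
  have hupper := hdom (ρseq n) (ρseq (n + 1))
  have h3 := bregman_three_point (F := G) ρ (ρseq (n + 1)) (ρseq n)
  rw [hiter n] at h3
  simp only [bregman, inner_neg_left, inner_sub_right] at hlin hupper h3 ⊢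
  linarith

theorem antitone_mirrorDescent (hHdiff : Differentiable ℝ H) (hGdiff : Differentiable ℝ G)
    (hHconv : ConvexOn ℝ Set.univ H) (hGconv : ConvexOn ℝ Set.univ G)
    (hdom : ∀ ρ ρ' : EuclideanSpace ℝ (Fin N), bregman H ρ' ρ ≤ bregman G ρ' ρ)
    (hiter : ∀ n : ℕ,
      gradient G (ρseq (n + 1)) - gradient G (ρseq n) = -gradient H (ρseq n)) :
    Antitone (H ∘ ρseq) := by
  refine antitone_nat_of_succ_le fun n => ?_
  have h := mirrorDescent_step_le hHdiff hHconv hdom hiter (ρseq n) n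
  rw [bregman_self] at h
  have := bregman_nonneg (hGdiff (ρseq (n + 1))) hGconv (ρseq n)
  simp only [Function.comp_apply]
  linarith

end MirrorDescent

/-- sublinear convergence rate for Bregman gradient descent:
`H(ρ_n) ≤ H(ρ) + G(ρ|ρ₀)/n` for all `ρ` and `n ≥ 1`; in particular if `ν`
minimizes `H` then `H(ρ_n) − H(ν) ≤ G(ν|ρ₀)/n`. -/
theorem sublinear_rate {N : ℕ} (H G : EuclideanSpace ℝ (Fin N) → ℝ)
    (hHdiff : Differentiable ℝ H) (hGdiff : Differentiable ℝ G)
    (hHconv : ConvexOn ℝ Set.univ H) (hGconv : ConvexOn ℝ Set.univ G)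
    (hdom : ∀ ρ ρ' : EuclideanSpace ℝ (Fin N), bregman H ρ' ρ ≤ bregman G ρ' ρ)
    (ρseq : ℕ → EuclideanSpace ℝ (Fin N))
    (hiter : ∀ n : ℕ,
      gradient G (ρseq (n + 1)) - gradient G (ρseq n) = -gradient H (ρseq n)) :
    (∀ (ρ : EuclideanSpace ℝ (Fin N)) (n : ℕ), 1 ≤ n →
        H (ρseq n) ≤ H ρ + bregman G ρ (ρseq 0) / n) ∧
    (∀ ν : EuclideanSpace ℝ (Fin N), (∀ ρ, H ν ≤ H ρ) →
      ∀ n : ℕ, 1 ≤ n → H (ρseq n) - H ν ≤ bregman G ν (ρseq 0) / n) := by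
  have rate : ∀ (ρ : EuclideanSpace ℝ (Fin N)) (n : ℕ), 1 ≤ n →
      H (ρseq n) ≤ H ρ + bregman G ρ (ρseq 0) / n := fun ρ _ hn =>
    le_add_div_of_antitone_of_le_add_sub (a := H ∘ ρseq)
      (antitone_mirrorDescent hHdiff hGdiff hHconv hGconv hdom hiter)
      (fun n => bregman_nonneg (hGdiff (ρseq n)) hGconv ρ)
      (mirrorDescent_step_le hHdiff hHconv hdom hiter ρ) hn
  exact ⟨rate, fun ν _ n hn => sub_le_iff_le_add'.mpr (rate ν n hn)⟩
end

section
/- Let X and Y be finite sets, μ a probability measure on X with μ(x) > 0 for all x, ν a probability measure on Y with ν(y) > 0 for all y, and R : X × Y → [0,∞) with Σ_y R(x,y) > 0 for every x and Σ_x R(x,y) > 0 for every y. Let (φ_n)_{n≥0} be the Sinkhorn iterates φ_{n+1} = ((φ_n)⁺)⁻ starting from any φ₀ : Y → ℝ, and let ρ_n = ∇F(φ_n) be the Y-marginal of the coupling π(φ_n). Then the Sinkhorn scheme is a Bregman gradient descent of the relative entropy H_ν(ρ) = H(ρ|ν) with movement limiter F*: for every n ≥ 0, ∇F(φ_n) =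 ρ_n and φ_{n+1}(y) − φ_n(y) = −ln( ρ_n(y)/ν(y) ); consequently ∇F( φ_n − ln(ρ_n/ν) ) = ρ_{n+1}, i.e. (F*)'(ρ_{n+1}) − (F*)'(ρ_n) = −H'_ν(ρ_n) with (F*)'(ρ_n) = φ_n. -/
open scoped BigOperators

/-- The `+`-transform: `φ⁺(x) = ln( Σ_y e^{φ(y)} R(x,y) / μ(x) )`. -/
noncomputable def plusT {X Y : Type*} [Fintype Y] (μ : X → ℝ) (R : X → Y → ℝ)
    (φ : Y → ℝ) (x : X) : ℝ :=
  Real.log ((∑ y, Real.exp (φ y) * R x y) / μ x)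

/-- The `−`-transform: `ψ⁻(y) = −ln( Σ_x e^{−ψ(x)} R(x,y) / ν(y) )`. -/
noncomputable def minusT {X Y : Type*} [Fintype X] (ν : Y → ℝ) (R : X → Y → ℝ)
    (ψ : X → ℝ) (y : Y) : ℝ :=
  -Real.log ((∑ x, Real.exp (-ψ x) * R x y) / ν y)

/-- The coupling `π(φ)(x,y) = e^{φ(y) − φ⁺(x)} R(x,y)`. -/
noncomputable def coupling {X Y : Type*} [Fintype Y] (μ : X → ℝ) (R : X → Y → ℝ)
    (φ : Y → ℝ) (x : X) (y : Y) : ℝ :=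
  Real.exp (φ y - plusT μ R φ x) * R x y

/-- The functional `F(φ) = Σ_x μ(x) φ⁺(x)`. -/
noncomputable def Ffun {X Y : Type*} [Fintype X] [Fintype Y] (μ : X → ℝ)
    (R : X → Y → ℝ) (φ : Y → ℝ) : ℝ :=
  ∑ x, μ x * plusT μ R φ x

/-!
`F` is a `μ`-weighted sum of log-sum-exp functions of `φ`, so its gradient is the `μ`-weighted sum
of the corresponding softmax weights, which is exactly the `Y`-marginal `ρ` of `π(φ)`. Factoring
`e^{φ(y)}` out of that marginal gives
`ρ(y) = e^{φ(y)} Σ_x e^{−φ⁺(x)} R(x,y) = ν(y) e^{φ(y) − ((φ⁺)⁻)(y)}`, so the Sinkhorn step is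
`φ_{n+1} = φ_n − ln(ρ_n/ν)`, and the gradient formula at `φ_{n+1}` gives the last claim.
-/

open Real

theorem sum_exp_mul_pos {ι : Type*} [Fintype ι] (g r : ι → ℝ) (hr : ∀ i, 0 ≤ r i)
    (hsum : 0 < ∑ i, r i) : 0 < ∑ i, exp (g i) * r i := by
  obtain ⟨i, -, hi⟩ :=
    Finset.exists_lt_of_sum_lt (f := fun _ => (0 : ℝ)) (g := r) (s := .univ) (by simpa using hsum)
  exact Finset.sum_pos' (fun j _ => mul_nonneg (exp_pos _).le (hr j))
    ⟨i, Finset.mem_univ i, mul_pos (exp_pos _) hi⟩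

theorem hasFDerivAt_sum_exp_mul {ι : Type*} [Fintype ι] (w φ : ι → ℝ) :
    HasFDerivAt (fun ψ : ι → ℝ => ∑ i, exp (ψ i) * w i)
      (∑ i, (exp (φ i) * w i) • (ContinuousLinearMap.proj i : (ι → ℝ) →L[ℝ] ℝ)) φ := by
  refine HasFDerivAt.fun_sum fun i _ => ?_
  refine (((ContinuousLinearMap.proj i : (ι → ℝ) →L[ℝ] ℝ).hasFDerivAt.exp).mul_const
    (w i)).congr_fderiv ?_
  rw [smul_smul, mul_comm, ContinuousLinearMap.proj_apply]

section Potentials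

variable {X Y : Type*} [Fintype Y] (μ : X → ℝ) (R : X → Y → ℝ)

theorem sum_coupling_eq_exp_mul [Fintype X] (φ : Y → ℝ) (y : Y) :
    ∑ x, coupling μ R φ x y = exp (φ y) * ∑ x, exp (-plusT μ R φ x) * R x y := by
  rw [Finset.mul_sum]
  refine Finset.sum_congr rfl fun x _ => ?_
  rw [coupling, sub_eq_add_neg, exp_add, mul_assoc]

theorem hasFDerivAt_mul_plusT {x : X} (hμ : 0 < μ x) (hR : ∀ y, 0 ≤ R x y)
    (hrow : 0 < ∑ y, R x y) (φ : Y → ℝ) :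
    HasFDerivAt (fun ψ => μ x * plusT μ R ψ x)
      (∑ y, coupling μ R φ x y • (ContinuousLinearMap.proj y : (Y → ℝ) →L[ℝ] ℝ)) φ := by
  have hS : 0 < ∑ y, exp (φ y) * R x y := sum_exp_mul_pos φ (R x) hR hrow
  have hlog := (((hasFDerivAt_sum_exp_mul (R x) φ).mul_const (μ x)⁻¹).log
    (div_pos hS hμ).ne').const_mul (μ x)
  simp only [plusT, div_eq_mul_inv]
  refine hlog.congr_fderiv ?_
  simp only [Finset.smul_sum, smul_smul]
  refine Finset.sum_congr rfl fun y _ => ?_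
  rw [coupling, exp_sub, plusT, exp_log (div_pos hS hμ)]
  field_simp

theorem hasFDerivAt_Ffun [Fintype X] (hμ : ∀ x, 0 < μ x) (hR : ∀ x y, 0 ≤ R x y)
    (hrow : ∀ x, 0 < ∑ y, R x y) (φ : Y → ℝ) :
    HasFDerivAt (Ffun μ R)
      (∑ y, (∑ x, coupling μ R φ x y) • (ContinuousLinearMap.proj y : (Y → ℝ) →L[ℝ] ℝ)) φ := by
  have hsum := HasFDerivAt.fun_sum fun x (_ : x ∈ Finset.univ) =>
    hasFDerivAt_mul_plusT μ R (hμ x) (hR x) (hrow x) φ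
  refine hsum.congr_fderiv ?_
  simp only [Finset.sum_smul]
  exact Finset.sum_comm

theorem fderiv_Ffun_apply [Fintype X] (hμ : ∀ x, 0 < μ x) (hR : ∀ x y, 0 ≤ R x y)
    (hrow : ∀ x, 0 < ∑ y, R x y) (φ h : Y → ℝ) :
    fderiv ℝ (Ffun μ R) φ h = ∑ y, (∑ x, coupling μ R φ x y) * h y := by
  simp [(hasFDerivAt_Ffun μ R hμ hR hrow φ).fderiv]

theorem minusT_plusT_sub_self [Fintype X] (ν : Y → ℝ) (φ : Y → ℝ) {y : Y} (hν : ν y ≠ 0)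
    (hR : ∀ x, 0 ≤ R x y) (hcol : 0 < ∑ x, R x y) :
    minusT ν R (plusT μ R φ) y - φ y = -log ((∑ x, coupling μ R φ x y) / ν y) := by
  have hT := sum_exp_mul_pos (fun x => -plusT μ R φ x) (fun x => R x y) hR hcol
  rw [minusT, sum_coupling_eq_exp_mul, mul_div_assoc,
    log_mul (exp_ne_zero _) (div_ne_zero hT.ne' hν), log_exp]
  ring

end Potentials

theorem sinkhorn_is_bregman_gradient_descent_general {X Y : Type*} [Fintype X] [Fintype Y]
    (μ : X → ℝ) (ν : Y → ℝ) (R : X → Y → ℝ)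
    (hμpos : ∀ x, 0 < μ x)
    (hνpos : ∀ y, 0 < ν y)
    (hR : ∀ x y, 0 ≤ R x y)
    (hrow : ∀ x, 0 < ∑ y, R x y) (hcol : ∀ y, 0 < ∑ x, R x y)
    (φ : ℕ → Y → ℝ)
    (hiter : ∀ n, φ (n + 1) = minusT ν R (plusT μ R (φ n)))
    (ρ : ℕ → Y → ℝ) (hρ : ∀ n y, ρ n y = ∑ x, coupling μ R (φ n) x y) :
    (∀ (n : ℕ) (h : Y → ℝ),
        fderiv ℝ (Ffun μ R) (φ n) h = ∑ y, ρ n y * h y) ∧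
    (∀ (n : ℕ) (y : Y),
        φ (n + 1) y - φ n y = -Real.log (ρ n y / ν y)) ∧
    (∀ (n : ℕ) (h : Y → ℝ),
        fderiv ℝ (Ffun μ R) (fun y => φ n y - Real.log (ρ n y / ν y)) h =
          ∑ y, ρ (n + 1) y * h y) := by
  have hgrad : ∀ n h, fderiv ℝ (Ffun μ R) (φ n) h = ∑ y, ρ n y * h y := fun n h => by
    simp only [hρ]
    exact fderiv_Ffun_apply μ R hμpos hR hrow (φ n) h
  have hstep : ∀ n y, φ (n + 1) y - φ n y = -log (ρ n y / ν y) := fun n y => by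
    rw [hiter, hρ]
    exact minusT_plusT_sub_self μ R ν (φ n) (hνpos y).ne' (fun x => hR x y) (hcol y)
  refine ⟨hgrad, hstep, fun n h => ?_⟩
  have hnext : (fun y => φ n y - log (ρ n y / ν y)) = φ (n + 1) :=
    funext fun y => by linarith [hstep n y]
  rw [hnext, hgrad]

/-- the Sinkhorn scheme `φ_{n+1} = ((φ_n)⁺)⁻` is a Bregman gradient
descent of `H_ν(ρ) = H(ρ|ν)` with movement limiter `F*`: for every `n`,
`∇F(φ_n) = ρ_n`, `φ_{n+1} − φ_n = −ln(ρ_n/ν)`, and consequently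
`∇F(φ_n − ln(ρ_n/ν)) = ρ_{n+1}`, i.e. `(F*)'(ρ_{n+1}) − (F*)'(ρ_n) = −H'_ν(ρ_n)`. -/
theorem sinkhorn_is_bregman_gradient_descent {X Y : Type*} [Fintype X] [Fintype Y]
    (μ : X → ℝ) (ν : Y → ℝ) (R : X → Y → ℝ)
    (hμpos : ∀ x, 0 < μ x) (hμ : ∑ x, μ x = 1)
    (hνpos : ∀ y, 0 < ν y) (hν : ∑ y, ν y = 1)
    (hR : ∀ x y, 0 ≤ R x y)
    (hrow : ∀ x, 0 < ∑ y, R x y) (hcol : ∀ y, 0 < ∑ x, R x y)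
    (φ : ℕ → Y → ℝ)
    (hiter : ∀ n, φ (n + 1) = minusT ν R (plusT μ R (φ n)))
    (ρ : ℕ → Y → ℝ) (hρ : ∀ n y, ρ n y = ∑ x, coupling μ R (φ n) x y) :
    (∀ (n : ℕ) (h : Y → ℝ),
        fderiv ℝ (Ffun μ R) (φ n) h = ∑ y, ρ n y * h y) ∧
    (∀ (n : ℕ) (y : Y),
        φ (n + 1) y - φ n y = -Real.log (ρ n y / ν y)) ∧
    (∀ (n : ℕ) (h : Y → ℝ),
        fderiv ℝ (Ffun μ R) (fun y => φ n y - Real.log (ρ n y / ν y)) h =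
          ∑ y, ρ (n + 1) y * h y) :=
  sinkhorn_is_bregman_gradient_descent_general μ ν R hμpos hνpos hR hrow hcol φ hiter ρ hρ
end
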